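/- arXiv:2112.10119 — 7 statements merged into one kernel-verified Lean document; each statement's English description precedes it below -/
import Mathlib

section
/- Let r, k be natural numbers with 1 ≤ k ≤ r. Then ∑_{j=r+1}^{2r} (-1)^j · C(2r, j) · (j-r)^{2k} equals 0 if k < r, and equals (2r)!/2 if k = r. -/
/-!
The full alternating sum `∑_{j=0}^{2r} (-1)^j C(2r,j) (j-r)^{2k}` is the `2r`-th forward difference
of `x ↦ (x-r)^{2k}` at `0`, i.e. of `x ↦ x^{2k}` at `-r`; it vanishes when `2k < 2r` and equals
`(2r)!` when `k = r`. The summand is invariant under `j ↦ 2r - j` and vanishes at `j = r`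
(as `k ≥ 1`), so the sum over `j > r` is half of the full sum.
-/

open Finset Nat fwdDiff

lemma neg_one_pow_sub_of_even {R : Type*} [Ring R] {m j : ℕ} (hm : Even m)
    (hj : j ≤ m) : (-1 : R) ^ (m - j) = (-1) ^ j := by
  rw [neg_one_pow_eq_pow_mod_two, neg_one_pow_eq_pow_mod_two (n := j)]
  obtain ⟨t, rfl⟩ := hm
  congr 1; omega

theorem sum_range_neg_one_pow_mul_choose_mul_sub_pow {R : Type*} [CommRing R] {m n : ℕ}
    (hmn : m ≤ n) (c : R) :
    ∑ j ∈ range (n + 1), (-1) ^ (n - j) * n.choose j * ((j : R) - c) ^ m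
      = if m < n then 0 else (n ! : R) := by
  have hshift :
      (Δ_[1])^[n] (fun x : R ↦ (x - c) ^ m) 0 = (Δ_[1])^[n] (fun x : R ↦ x ^ m) (-c) := by
    simpa [sub_eq_add_neg] using fwdDiff_iter_comp_add 1 (fun x : R ↦ x ^ m) (-c) n 0
  have hsum := fwdDiff_iter_eq_sum_shift (1 : R) (fun x : R ↦ (x - c) ^ m) n 0
  simp only [zero_add, nsmul_eq_mul, mul_one, zsmul_eq_mul] at hsum
  push_cast at hsum
  rw [← hsum, hshift]
  split_ifs with h
  · rw [fwdDiff_iter_pow_eq_zero_of_lt h, Pi.zero_apply]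
  · rw [show m = n by omega, fwdDiff_iter_eq_factorial]; rfl

theorem sum_range_two_mul_add_one_eq_of_symm {M : Type*} [AddCommMonoid M] (g : ℕ → M) (r : ℕ)
    (hg : ∀ j ≤ 2 * r, g (2 * r - j) = g j) :
    ∑ j ∈ range (2 * r + 1), g j = g r + 2 • ∑ j ∈ Icc (r + 1) (2 * r), g j := by
  have hreflect : ∑ j ∈ range r, g j = ∑ j ∈ Icc (r + 1) (2 * r), g j := by
    calc ∑ j ∈ range r, g j = ∑ j ∈ Ico 0 r, g (2 * r - j) := by
          rw [range_eq_Ico]; exact sum_congr rfl fun j hj ↦ (hg j (by simp at hj; omega)).symm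
      _ = ∑ j ∈ Icc (r + 1) (2 * r), g j := by
          rw [sum_Ico_reflect _ _ (by omega), ← Ico_add_one_right_eq_Icc]
          congr 2; omega
  rw [range_eq_Ico, ← sum_Ico_consecutive _ (Nat.zero_le (r + 1)) (by omega : r + 1 ≤ 2 * r + 1),
    ← range_eq_Ico, sum_range_succ, hreflect, Ico_add_one_right_eq_Icc, two_nsmul]
  abel

theorem stmt1 (r k : ℕ) (hk1 : 1 ≤ k) (hkr : k ≤ r) :
    (∑ j ∈ Finset.Icc (r + 1) (2 * r),
        (-1 : ℚ) ^ j * ((2 * r).choose j) * ((j : ℚ) - r) ^ (2 * k))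
      = if k < r then 0 else ((2 * r).factorial : ℚ) / 2 := by
  set g : ℕ → ℚ := fun j ↦ (-1) ^ j * ((2 * r).choose j) * ((j : ℚ) - r) ^ (2 * k)
  have hfull : ∑ j ∈ range (2 * r + 1), g j = if k < r then 0 else ((2 * r)! : ℚ) := by
    simp only [show k < r ↔ 2 * k < 2 * r by omega]
    rw [← sum_range_neg_one_pow_mul_choose_mul_sub_pow (by omega) (r : ℚ)]
    refine sum_congr rfl fun j hj ↦ ?_
    rw [neg_one_pow_sub_of_even (even_two_mul r) (by simpa [Nat.lt_succ_iff] using hj)]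
  have hsymm : ∀ j ≤ 2 * r, g (2 * r - j) = g j := by
    intro j hj
    simp only [g, neg_one_pow_sub_of_even (even_two_mul r) hj, choose_symm hj, cast_sub hj]
    push_cast
    rw [show (2 * r - j - r : ℚ) = -(j - r) by ring, (even_two_mul k).neg_pow]
  have hmiddle : g r = 0 := by simp only [g, sub_self, zero_pow (by omega : 2 * k ≠ 0), mul_zero]
  rw [sum_range_two_mul_add_one_eq_of_symm g r hsymm, hmiddle, zero_add, two_nsmul] at hfull
  split_ifs at hfull ⊢ <;> linarith
end

section
/- Let f : ℝ → ℝ be (2m+2)-times continuously differentiable on an interval containing [a - h/2, a + h/2] with h > 0. Define f̄(a) = (1/h)·∫_{a-h/2}^{a+h/2} f(x) dx. Then f̄(a) = ∑_{t=0}^{m} h^{2t}/((2t+1)!·2^{2t}) · f^{(2t)}(a) + R, where |R| ≤ h^{2m+2}/((2m+3)!·2^{2m+2}) · sup of |f^{(2m+2)}| on [a-h/2, a+h/2]. -/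
/-!
Expand `f` to order `2m+1` at the centre `a` of the cell, with derivatives taken within `[l, u]`.
Over the symmetric cell the odd monomials integrate to zero and `(x - a) ^ (2t)` integrates to
`2 (h/2)^(2t+1) / (2t+1)`, which produces the even-derivative sum. The Lagrange remainder is
bounded by `M (x - a)^(2m+2) / (2m+2)!` with `M` the supremum of `|f^(2m+2)|` on the cell, and
integrating this bound gives the stated estimate.
-/

open intervalIntegral Set
open scoped Nat

theorem iteratedDerivWithin_eq_of_subset {𝕜 F : Type*} [NontriviallyNormedField 𝕜]
    [NormedAddCommGroup F] [NormedSpace 𝕜 F] {f : 𝕜 → F} {s t : Set 𝕜} {x : 𝕜} {n : ℕ}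
    (hst : s ⊆ t) (hs : UniqueDiffOn 𝕜 s) (ht : UniqueDiffOn 𝕜 t) (hf : ContDiffOn 𝕜 n f t)
    (hx : x ∈ s) : iteratedDerivWithin n f s x = iteratedDerivWithin n f t x := by
  simp only [iteratedDerivWithin_eq_iteratedFDerivWithin,
    iteratedFDerivWithin_subset hst hs ht hf hx]

theorem taylorWithinEval_eq_of_subset {E : Type*} [NormedAddCommGroup E] [NormedSpace ℝ E]
    {f : ℝ → E} {s t : Set ℝ} {x₀ x : ℝ} {n : ℕ}
    (hst : s ⊆ t) (hs : UniqueDiffOn ℝ s) (ht : UniqueDiffOn ℝ t) (hf : ContDiffOn ℝ n f t)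
    (hx₀ : x₀ ∈ s) : taylorWithinEval f n s x₀ x = taylorWithinEval f n t x₀ x := by
  simp only [taylor_within_apply]
  refine Finset.sum_congr rfl fun k hk => ?_
  rw [iteratedDerivWithin_eq_of_subset hst hs ht (hf.of_le ?_) hx₀]
  exact_mod_cast Nat.lt_succ_iff.mp (Finset.mem_range.mp hk)

theorem abs_sub_taylorWithinEval_le {f : ℝ → ℝ} {s : Set ℝ} {x₀ x M : ℝ} {n : ℕ}
    (hs : UniqueDiffOn ℝ s) (hsub : uIcc x₀ x ⊆ s) (hf : ContDiffOn ℝ (n + 1) f s)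
    (hM : ∀ y ∈ uIcc x₀ x, |iteratedDerivWithin (n + 1) f s y| ≤ M) :
    |f x - taylorWithinEval f n s x₀ x| ≤ M * |x - x₀| ^ (n + 1) / (n + 1)! := by
  rcases eq_or_ne x₀ x with rfl | hne
  · simp
  obtain ⟨y, hy, hrem⟩ := taylor_mean_remainder_lagrange_iteratedDeriv hne (hf.mono hsub)
  have hys : s ∈ nhds y :=
    Filter.mem_of_superset (Ioo_mem_nhds hy.1 hy.2) (uIoo_subset_uIcc_self.trans hsub)
  rw [← taylorWithinEval_eq_of_subset hsub (uniqueDiffOn_uIcc hne) hs hf.of_succ left_mem_uIcc,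
    hrem, ← iteratedDerivWithin_eq_iteratedDeriv hs (hf.contDiffAt hys) (mem_of_mem_nhds hys),
    abs_div, abs_mul, abs_pow, Nat.abs_cast]
  gcongr
  exact hM y (uIoo_subset_uIcc_self hy)

theorem integral_sub_pow_symm (c r : ℝ) (k : ℕ) :
    ∫ x in (c - r)..(c + r), (x - c) ^ k = (r ^ (k + 1) - (-r) ^ (k + 1)) / (k + 1) := by
  rw [integral_comp_sub_right (· ^ k), integral_pow, add_sub_cancel_left, sub_sub_cancel_left]

theorem integral_sub_pow_symm_even (c r : ℝ) (t : ℕ) :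
    ∫ x in (c - r)..(c + r), (x - c) ^ (2 * t) = 2 * r ^ (2 * t + 1) / (2 * t + 1) := by
  rw [integral_sub_pow_symm, Odd.neg_pow ⟨t, rfl⟩]
  push_cast
  ring

theorem integral_sub_pow_symm_odd (c r : ℝ) (t : ℕ) :
    ∫ x in (c - r)..(c + r), (x - c) ^ (2 * t + 1) = 0 := by
  rw [integral_sub_pow_symm, Even.neg_pow ⟨t + 1, by ring⟩, sub_self, zero_div]

theorem Finset.sum_range_two_mul {M : Type*} [AddCommMonoid M] (n : ℕ) (g : ℕ → M) :
    ∑ k ∈ Finset.range (2 * n), g k = ∑ t ∈ Finset.range n, (g (2 * t) + g (2 * t + 1)) := by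
  induction n with
  | zero => simp
  | succ n ih =>
    rw [mul_add_one, Finset.sum_range_succ, Finset.sum_range_succ, Finset.sum_range_succ, ih,
      add_assoc]

theorem integral_taylorWithinEval_symm (f : ℝ → ℝ) (s : Set ℝ) (c r : ℝ) (m : ℕ) :
    ∫ x in (c - r)..(c + r), taylorWithinEval f (2 * m + 1) s c x
      = ∑ t ∈ Finset.range (m + 1),
          2 * r ^ (2 * t + 1) / (2 * t + 1)! * iteratedDerivWithin (2 * t) f s c := by
  simp_rw [taylor_within_apply, smul_eq_mul]
  rw [integral_finsetSum fun k _ => by apply Continuous.intervalIntegrable; fun_prop,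
    show 2 * m + 1 + 1 = 2 * (m + 1) by ring, Finset.sum_range_two_mul]
  refine Finset.sum_congr rfl fun t _ => ?_
  simp only [integral_mul_const, integral_const_mul, integral_sub_pow_symm_even,
    integral_sub_pow_symm_odd, mul_zero, zero_mul, add_zero, Nat.factorial_succ]
  push_cast
  field_simp

theorem abs_integral_sub_taylorWithinEval_symm_le {f : ℝ → ℝ} {s : Set ℝ} {c r M : ℝ} {m : ℕ}
    (hr : 0 ≤ r) (hs : UniqueDiffOn ℝ s) (hsub : Icc (c - r) (c + r) ⊆ s)
    (hf : ContDiffOn ℝ (2 * m + 2) f s)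
    (hM : ∀ y ∈ Icc (c - r) (c + r), |iteratedDerivWithin (2 * m + 2) f s y| ≤ M) :
    |∫ x in (c - r)..(c + r), (f x - taylorWithinEval f (2 * m + 1) s c x)|
      ≤ 2 * M * r ^ (2 * m + 3) / (2 * m + 3)! := by
  have hc : c ∈ Icc (c - r) (c + r) := ⟨by linarith, by linarith⟩
  have hpointwise : ∀ x ∈ Icc (c - r) (c + r), |f x - taylorWithinEval f (2 * m + 1) s c x|
      ≤ M / (2 * m + 2)! * (x - c) ^ (2 * (m + 1)) := by
    intro x hx
    have hcx : uIcc c x ⊆ Icc (c - r) (c + r) := uIcc_subset_Icc hc hx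
    have := abs_sub_taylorWithinEval_le hs (hcx.trans hsub) (by exact_mod_cast hf)
      fun y hy => hM y (hcx hy)
    rw [Even.pow_abs ⟨m + 1, by ring⟩, mul_div_right_comm] at this
    exact this
  rw [← Real.norm_eq_abs]
  refine (norm_integral_le_of_norm_le (by linarith)
    (Filter.Eventually.of_forall fun x hx => hpointwise x (Ioc_subset_Icc_self hx))
    (by apply Continuous.intervalIntegrable; fun_prop)).trans_eq ?_
  rw [integral_const_mul, integral_sub_pow_symm_even, Nat.factorial_succ (2 * m + 2)]
  push_cast
  field_simp
  ring

theorem abs_average_sub_sum_iteratedDerivWithin_le {f : ℝ → ℝ} {s : Set ℝ} {c r M : ℝ} {m : ℕ}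
    (hr : 0 < r) (hs : UniqueDiffOn ℝ s) (hsub : Icc (c - r) (c + r) ⊆ s)
    (hf : ContDiffOn ℝ (2 * m + 2) f s)
    (hM : ∀ y ∈ Icc (c - r) (c + r), |iteratedDerivWithin (2 * m + 2) f s y| ≤ M) :
    |(2 * r)⁻¹ * (∫ x in (c - r)..(c + r), f x)
        - ∑ t ∈ Finset.range (m + 1),
            r ^ (2 * t) / (2 * t + 1)! * iteratedDerivWithin (2 * t) f s c|
      ≤ r ^ (2 * m + 2) / (2 * m + 3)! * M := by
  have hcr : uIcc (c - r) (c + r) = Icc (c - r) (c + r) := uIcc_of_le (by linarith)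
  have hf_int : IntervalIntegrable f MeasureTheory.volume (c - r) (c + r) :=
    (hf.continuousOn.mono (hcr ▸ hsub)).intervalIntegrable
  have htaylor_int : IntervalIntegrable (fun x => taylorWithinEval f (2 * m + 1) s c x)
      MeasureTheory.volume (c - r) (c + r) := by
    simp_rw [taylor_within_apply]
    apply Continuous.intervalIntegrable
    fun_prop
  have hsum : ∑ t ∈ Finset.range (m + 1),
        r ^ (2 * t) / (2 * t + 1)! * iteratedDerivWithin (2 * t) f s c
      = (2 * r)⁻¹ * ∫ x in (c - r)..(c + r), taylorWithinEval f (2 * m + 1) s c x := by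
    rw [integral_taylorWithinEval_symm, Finset.mul_sum]
    refine Finset.sum_congr rfl fun t _ => ?_
    field_simp
    ring
  rw [hsum, ← mul_sub, ← integral_sub hf_int htaylor_int, abs_mul,
    abs_of_pos (by positivity)]
  calc _ ≤ (2 * r)⁻¹ * (2 * M * r ^ (2 * m + 3) / (2 * m + 3)!) := by
        gcongr
        exact abs_integral_sub_taylorWithinEval_symm_le hr.le hs hsub hf hM
    _ = r ^ (2 * m + 2) / (2 * m + 3)! * M := by
        field_simp
        ring

theorem stmt3 (m : ℕ) (f : ℝ → ℝ) (a h l u : ℝ) (hh : 0 < h)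
    (hsub : Set.Icc (a - h / 2) (a + h / 2) ⊆ Set.Icc l u)
    (hf : ContDiffOn ℝ (2 * m + 2) f (Set.Icc l u)) :
    ∃ R : ℝ,
      (1 / h) * (∫ x in (a - h / 2)..(a + h / 2), f x)
        = (∑ t ∈ Finset.range (m + 1),
            h ^ (2 * t) / ((2 * t + 1).factorial * 2 ^ (2 * t))
              * iteratedDerivWithin (2 * t) f (Set.Icc l u) a) + R ∧
      |R| ≤ h ^ (2 * m + 2) / ((2 * m + 3).factorial * 2 ^ (2 * m + 2))
              * ⨆ x : Set.Icc (a - h / 2) (a + h / 2),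
                  |iteratedDerivWithin (2 * m + 2) f (Set.Icc l u) x| := by
  have hlu : l < u := by
    have hl := (hsub (left_mem_Icc.mpr (by linarith))).1
    have hu := (hsub (right_mem_Icc.mpr (by linarith))).2
    linarith
  have hs : UniqueDiffOn ℝ (Icc l u) := uniqueDiffOn_Icc hlu
  have hM : ∀ y ∈ Icc (a - h / 2) (a + h / 2), |iteratedDerivWithin (2 * m + 2) f (Icc l u) y|
      ≤ ⨆ x : Icc (a - h / 2) (a + h / 2), |iteratedDerivWithin (2 * m + 2) f (Icc l u) x| :=
    fun y hy => le_ciSup_set (isCompact_Icc.bddAbove_image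
      ((hf.continuousOn_iteratedDerivWithin le_rfl hs).mono hsub).abs) hy
  have hsum : ∑ t ∈ Finset.range (m + 1), h ^ (2 * t) / ((2 * t + 1)! * 2 ^ (2 * t))
        * iteratedDerivWithin (2 * t) f (Icc l u) a
      = ∑ t ∈ Finset.range (m + 1), (h / 2) ^ (2 * t) / (2 * t + 1)!
        * iteratedDerivWithin (2 * t) f (Icc l u) a :=
    Finset.sum_congr rfl fun t _ => by rw [div_pow]; ring
  refine ⟨_, (add_sub_cancel _ _).symm, ?_⟩
  rw [hsum, show 1 / h = (2 * (h / 2))⁻¹ by ring,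
    show h ^ (2 * m + 2) / ((2 * m + 3)! * 2 ^ (2 * m + 2))
      = (h / 2) ^ (2 * m + 2) / (2 * m + 3)! by rw [div_pow]; ring]
  exact abs_average_sub_sum_iteratedDerivWithin_le (half_pos hh) hs hsub hf hM
end

section
/- Let P : ℝ → ℝ be a polynomial of degree at most 5, a ∈ ℝ, h > 0. With P̄(x) = (1/h)·∫_{x-h/2}^{x+h/2} P(t) dt, Δ²g(a) = g(a-h) - 2g(a) + g(a+h), and Δ⁴g(a) = g(a-2h) - 4g(a-h) + 6g(a) - 4g(a+h) + g(a+2h), one has P̄(a) - (1/24)·Δ²P̄(a) + (3/640)·Δ⁴P̄(a) = P(a). -/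
set_option maxHeartbeats 1000000

theorem stmt6 (P : Polynomial ℝ) (hP : P.degree ≤ 5) (a h : ℝ) (hh : 0 < h)
    (Pb : ℝ → ℝ)
    (hPb : ∀ x, Pb x = (1 / h) * ∫ t in (x - h / 2)..(x + h / 2), P.eval t) :
    Pb a - (1 / 24) * (Pb (a - h) - 2 * Pb a + Pb (a + h))
        + (3 / 640) * (Pb (a - 2 * h) - 4 * Pb (a - h) + 6 * Pb a
            - 4 * Pb (a + h) + Pb (a + 2 * h))
      = P.eval a := by
  have hd : P.natDegree < 6 := by
    have := Polynomial.natDegree_le_iff_degree_le.mpr hP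
    exact Nat.lt_succ_of_le this
  have heval : ∀ t : ℝ, P.eval t = ∑ i ∈ Finset.range 6, P.coeff i * t ^ i := by
    intro t
    exact Polynomial.eval_eq_sum_range' hd t
  have hint : ∀ u v : ℝ, (∫ t in u..v, P.eval t)
      = ∑ i ∈ Finset.range 6, P.coeff i * ((v ^ (i+1) - u ^ (i+1)) / (i+1)) := by
    intro u v
    rw [intervalIntegral.integral_congr (g := fun t => ∑ i ∈ Finset.range 6, P.coeff i * t ^ i)
      (fun t _ => heval t)]
    rw [intervalIntegral.integral_finset_sum]
    · refine Finset.sum_congr rfl fun i _ => ?_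
      rw [intervalIntegral.integral_const_mul, integral_pow]
    · intro i _
      exact (intervalIntegral.intervalIntegrable_pow i).const_mul _
  have hPb' : ∀ x, Pb x = (1 / h) * ∑ i ∈ Finset.range 6, P.coeff i * (((x + h/2) ^ (i+1) - (x - h/2) ^ (i+1)) / (i+1)) := by
    intro x; rw [hPb x, hint]
  simp only [hPb', heval a, Finset.sum_range_succ, Finset.sum_range_zero]
  push_cast
  have hh' : h ≠ 0 := ne_of_gt hh
  field_simp
  ring
end

section
/- Let P : ℝ → ℝ be a polynomial of degree at most 3, h > 0, n ∈ ℤ. Write P_j = P(jh) and P̄_j = (1/h)·∫_{jh-h/2}^{jh+h/2} P(x) dx. Then (47/1152)·(P̄_{n-2} + P̄_{n+2}) - (107/288)·(P̄_{n-1} + P̄_{n+1}) + (319/192)·P̄_n = -(1/6)·P_{n-1} + (4/3)·P_n - (1/6)·P_{n+1}. -/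
theorem stmt13 (P : Polynomial ℝ) (hP : P.degree ≤ 3) (h : ℝ) (hh : 0 < h) (n : ℤ)
    (Pb : ℤ → ℝ)
    (hPb : ∀ j : ℤ,
      Pb j = (1 / h) * ∫ x in ((j : ℝ) * h - h / 2)..((j : ℝ) * h + h / 2), P.eval x) :
    (47 / 1152) * (Pb (n - 2) + Pb (n + 2)) - (107 / 288) * (Pb (n - 1) + Pb (n + 1))
        + (319 / 192) * Pb n
      = -(1 / 6) * P.eval (((n - 1 : ℤ) : ℝ) * h) + (4 / 3) * P.eval ((n : ℝ) * h)
          - (1 / 6) * P.eval (((n + 1 : ℤ) : ℝ) * h) := by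
  have hdeg : P.natDegree < 4 := by
    exact Nat.lt_succ_of_le (Polynomial.natDegree_le_iff_degree_le.mpr hP)
  have hev : ∀ x : ℝ, P.eval x = ∑ i ∈ Finset.range 4, P.coeff i * x ^ i := fun x =>
    Polynomial.eval_eq_sum_range' hdeg x
  have hInt : ∀ a b : ℝ, (∫ x in a..b, P.eval x)
      = ∑ i ∈ Finset.range 4, P.coeff i * ((b ^ (i + 1) - a ^ (i + 1)) / (i + 1)) := by
    intro a b
    simp_rw [hev]
    rw [intervalIntegral.integral_finset_sum]
    · refine Finset.sum_congr rfl fun i _ => ?_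
      rw [intervalIntegral.integral_const_mul, integral_pow]
    · intro i _
      exact (continuous_const.mul (continuous_pow i)).intervalIntegrable _ _
  have hne : h ≠ 0 := ne_of_gt hh
  simp only [hPb]
  simp only [hInt]
  simp only [hev, Finset.sum_range_succ, Finset.sum_range_zero]
  push_cast
  field_simp
  ring
end

section
/- Let P : ℝ → ℝ be a polynomial of degree at most 3, h > 0, n ∈ ℤ. Define the hat-average data P²_j = ∫_ℝ P(jh + hz)·(1-|z|)⁺ dz and point values P_j = P(jh). Then (13/240)·(P²_{n-2} + P²_{n+2}) - (7/15)·(P²_{n-1} + P²_{n+1}) + (73/40)·P²_n = -(1/6)·P_{n-1} + (4/3)·P_n - (1/6)·P_{n+1}. -/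
open MeasureTheory

lemma hat_cont (k : ℕ) : Continuous (fun z : ℝ => z ^ k * max (1 - |z|) 0) :=
  (continuous_pow k).mul ((continuous_const.sub continuous_abs).max continuous_const)

lemma hat_integrable (k : ℕ) : Integrable (fun z : ℝ => z ^ k * max (1 - |z|) 0) := by
  apply (hat_cont k).integrable_of_hasCompactSupport
  apply HasCompactSupport.intro (isCompact_Icc (a := (-1:ℝ)) (b := 1))
  intro x hx
  simp only [Set.mem_Icc, not_and_or, not_le] at hx
  have h1 : 1 ≤ |x| := by
    rcases hx with hx | hx
    · rw [abs_of_neg (by linarith)]; linarith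
    · rw [abs_of_pos (by linarith)]; linarith
  rw [max_eq_right (by linarith), mul_zero]

lemma hat_int_eq (k : ℕ) : (∫ z : ℝ, z ^ k * max (1 - |z|) 0)
    = (∫ z in (-1:ℝ)..0, z ^ k * (1 + z)) + ∫ z in (0:ℝ)..1, z ^ k * (1 - z) := by
  have hind : (fun z : ℝ => z ^ k * max (1 - |z|) 0)
      = Set.indicator (Set.Ioc (-1:ℝ) 1) (fun z => z ^ k * (1 - |z|)) := by
    ext z
    by_cases hz : z ∈ Set.Ioc (-1:ℝ) 1
    · rw [Set.indicator_of_mem hz]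
      obtain ⟨h1, h2⟩ := hz
      have : |z| ≤ 1 := abs_le.mpr ⟨le_of_lt h1, h2⟩
      rw [max_eq_left (by linarith)]
    · rw [Set.indicator_of_notMem hz]
      simp only [Set.mem_Ioc, not_and_or, not_lt, not_le] at hz
      have h1 : 1 ≤ |z| := by
        rcases hz with hz | hz
        · rw [abs_of_nonpos (by linarith)]; linarith
        · rw [abs_of_pos (by linarith)]; linarith
      rw [max_eq_right (by linarith), mul_zero]
  have hii : ∀ a b : ℝ, IntervalIntegrable (fun z : ℝ => z ^ k * (1 - |z|)) volume a b :=
    fun a b => ((continuous_pow k).mul (continuous_const.sub continuous_abs)).intervalIntegrable a b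
  rw [hind, MeasureTheory.integral_indicator measurableSet_Ioc,
    ← intervalIntegral.integral_of_le (by norm_num : (-1:ℝ) ≤ 1),
    ← intervalIntegral.integral_add_adjacent_intervals (hii (-1) 0) (hii 0 1)]
  congr 1
  · apply intervalIntegral.integral_congr
    intro z hz
    rw [Set.uIcc_of_le (by norm_num : (-1:ℝ) ≤ 0)] at hz
    simp only []; rw [abs_of_nonpos hz.2]; ring
  · apply intervalIntegral.integral_congr
    intro z hz
    rw [Set.uIcc_of_le (by norm_num : (0:ℝ) ≤ 1)] at hz
    simp only []; rw [abs_of_nonneg hz.1]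

lemma hat_val (k : ℕ)
    (h1 : ∀ z : ℝ, z ^ k * (1 + z) = z ^ k + z ^ (k+1))
    (h2 : ∀ z : ℝ, z ^ k * (1 - z) = z ^ k - z ^ (k+1)) :
    (∫ z : ℝ, z ^ k * max (1 - |z|) 0)
    = ((0:ℝ) ^ (k+1) - (-1:ℝ) ^ (k+1)) / (k+1) + ((0:ℝ) ^ (k+2) - (-1:ℝ) ^ (k+2)) / (k+2)
      + (((1:ℝ) ^ (k+1) - 0 ^ (k+1)) / (k+1) - ((1:ℝ) ^ (k+2) - 0 ^ (k+2)) / (k+2)) := by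
  rw [hat_int_eq k]
  rw [intervalIntegral.integral_congr (fun z _ => h1 z),
    intervalIntegral.integral_congr (fun z _ => h2 z),
    intervalIntegral.integral_add (intervalIntegral.intervalIntegrable_pow k) (intervalIntegral.intervalIntegrable_pow (k+1)),
    intervalIntegral.integral_sub (intervalIntegral.intervalIntegrable_pow k) (intervalIntegral.intervalIntegrable_pow (k+1)),
    integral_pow, integral_pow, integral_pow, integral_pow]
  push_cast
  ring

lemma hat0 : (∫ z : ℝ, z ^ 0 * max (1 - |z|) 0) = 1 := by
  rw [hat_val 0 (fun z => by ring) (fun z => by ring)]; norm_num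
lemma hat1 : (∫ z : ℝ, z ^ 1 * max (1 - |z|) 0) = 0 := by
  rw [hat_val 1 (fun z => by ring) (fun z => by ring)]; norm_num
lemma hat2 : (∫ z : ℝ, z ^ 2 * max (1 - |z|) 0) = 1/6 := by
  rw [hat_val 2 (fun z => by ring) (fun z => by ring)]; norm_num
lemma hat3 : (∫ z : ℝ, z ^ 3 * max (1 - |z|) 0) = 0 := by
  rw [hat_val 3 (fun z => by ring) (fun z => by ring)]; norm_num

lemma int_comb (b0 b1 b2 b3 : ℝ) :
    (∫ z : ℝ, (b0 * (z ^ 0 * max (1 - |z|) 0) + (b1 * (z ^ 1 * max (1 - |z|) 0)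
      + (b2 * (z ^ 2 * max (1 - |z|) 0) + b3 * (z ^ 3 * max (1 - |z|) 0)))))
    = b0 + b2 / 6 := by
  have i0 : Integrable (fun z : ℝ => b0 * (z ^ 0 * max (1 - |z|) 0)) :=
    (hat_integrable 0).const_mul b0
  have i1 : Integrable (fun z : ℝ => b1 * (z ^ 1 * max (1 - |z|) 0)) :=
    (hat_integrable 1).const_mul b1
  have i2 : Integrable (fun z : ℝ => b2 * (z ^ 2 * max (1 - |z|) 0)) :=
    (hat_integrable 2).const_mul b2
  have i3 : Integrable (fun z : ℝ => b3 * (z ^ 3 * max (1 - |z|) 0)) :=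
    (hat_integrable 3).const_mul b3
  have i23 : Integrable (fun z : ℝ => b2 * (z ^ 2 * max (1 - |z|) 0)
      + b3 * (z ^ 3 * max (1 - |z|) 0)) := i2.add i3
  have i123 : Integrable (fun z : ℝ => b1 * (z ^ 1 * max (1 - |z|) 0)
      + (b2 * (z ^ 2 * max (1 - |z|) 0) + b3 * (z ^ 3 * max (1 - |z|) 0))) := i1.add i23
  rw [integral_add i0 i123, integral_add i1 i23, integral_add i2 i3,
    MeasureTheory.integral_const_mul, MeasureTheory.integral_const_mul, MeasureTheory.integral_const_mul, MeasureTheory.integral_const_mul,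
    hat0, hat1, hat2, hat3]
  ring

theorem stmt14 (P : Polynomial ℝ) (hP : P.degree ≤ 3) (h : ℝ) (hh : 0 < h) (n : ℤ)
    (P2 : ℤ → ℝ)
    (hP2 : ∀ j : ℤ,
      P2 j = ∫ z : ℝ, P.eval ((j : ℝ) * h + h * z) * max (1 - |z|) 0) :
    (13 / 240) * (P2 (n - 2) + P2 (n + 2)) - (7 / 15) * (P2 (n - 1) + P2 (n + 1))
        + (73 / 40) * P2 n
      = -(1 / 6) * P.eval (((n - 1 : ℤ) : ℝ) * h) + (4 / 3) * P.eval ((n : ℝ) * h)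
          - (1 / 6) * P.eval (((n + 1 : ℤ) : ℝ) * h) := by
  have hnd : P.natDegree < 4 :=
    Nat.lt_succ_of_le (Polynomial.natDegree_le_iff_degree_le.mpr hP)
  set a0 := P.coeff 0
  set a1 := P.coeff 1
  set a2 := P.coeff 2
  set a3 := P.coeff 3
  have heval : ∀ x : ℝ, P.eval x = a0 + a1 * x + a2 * x ^ 2 + a3 * x ^ 3 := by
    intro x
    rw [Polynomial.eval_eq_sum_range' hnd]
    simp only [Finset.sum_range_succ, Finset.sum_range_zero]
    ring
  have hP2' : ∀ j : ℤ, P2 j = P.eval ((j : ℝ) * h)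
      + (a2 + 3 * a3 * ((j : ℝ) * h)) * h ^ 2 / 6 := by
    intro j
    rw [hP2 j]
    set c := (j : ℝ) * h with hc
    have key : (fun z : ℝ => P.eval (c + h * z) * max (1 - |z|) 0)
        = fun z : ℝ => (a0 + a1*c + a2*c^2 + a3*c^3) * (z ^ 0 * max (1 - |z|) 0)
          + ((a1*h + 2*a2*c*h + 3*a3*c^2*h) * (z ^ 1 * max (1 - |z|) 0)
          + ((a2*h^2 + 3*a3*c*h^2) * (z ^ 2 * max (1 - |z|) 0)
          + (a3*h^3) * (z ^ 3 * max (1 - |z|) 0))) := by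
      funext z
      rw [heval]
      ring
    rw [key, int_comb, heval]
    ring
  rw [hP2' (n-2), hP2' (n+2), hP2' (n-1), hP2' (n+1), hP2' n]
  simp only [heval]
  push_cast
  ring
end

section
/- Let f : ℝ² → ℝ be 4-times continuously differentiable on an open set containing [a - 3h/2, a + 3h/2] × [b - 3h/2, b + 3h/2], h > 0, and let f̄(x,y) = (1/h²)·∫_{x-h/2}^{x+h/2}∫_{y-h/2}^{y+h/2} f(s,t) dt ds be the 2D cell average. With Δ^{2,x} and Δ^{2,y} the second central differences (step h) in each variable, one has f(a,b) = f̄(a,b) - (1/24)·(Δ^{2,x}f̄(a,b) + Δ^{2,y}f̄(a,b)) + (1/576)·Δ^{2,x}Δ^{2,y}f̄(a,b) + O(h⁴) as h → 0. -/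
/-!
In one variable, `pointReconstruction h u x = ū x - (1/24) Δ²ū x` (with `ū` the cell average of
width `h`) reproduces cubic polynomials exactly and is bounded by `7/6 · sup |u|` on
`[x - 3h/2, x + 3h/2]`; comparing `u` with its cubic Taylor polynomial gives an error
`O(sup |u⁽⁴⁾| · h⁴)`. The two-dimensional formula is this reconstruction applied in `t` and then
in `s`, so its error is the one-dimensional error of the row `s ↦ f (s, b)` plus the
reconstruction in `s` of the one-dimensional errors of the columns. To have the fourth derivatives
of all these slices bounded, `f` is first replaced by a smooth cut-off of it that agrees with it
on the box.
-/

open Set Metric Filter Topology intervalIntegral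

noncomputable def cellAverage (h : ℝ) (u : ℝ → ℝ) (x : ℝ) : ℝ :=
  h⁻¹ * ∫ t in x - h / 2..x + h / 2, u t

noncomputable def pointReconstruction (h : ℝ) (u : ℝ → ℝ) (x : ℝ) : ℝ :=
  cellAverage h u x - 1 / 24 * (cellAverage h u (x - h) - 2 * cellAverage h u x
    + cellAverage h u (x + h))

noncomputable def cellAverage2 (h : ℝ) (g : ℝ × ℝ → ℝ) (x y : ℝ) : ℝ :=
  cellAverage h (fun s => cellAverage h (fun t => g (s, t)) y) x

lemma cellAverage_cubic (h L x : ℝ) (c : ℕ → ℝ) (hh : h ≠ 0) :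
    cellAverage h (fun t => ∑ k ∈ Finset.range 4, c k * (t - L) ^ k) x =
      ∑ k ∈ Finset.range 4,
        c k * ((x + h / 2 - L) ^ (k + 1) - (x - h / 2 - L) ^ (k + 1)) / (h * (k + 1)) := by
  rw [cellAverage, integral_comp_sub_right (fun u => ∑ k ∈ Finset.range 4, c k * u ^ k),
    integral_finsetSum (f := fun k u => c k * u ^ k)
      (fun k _ => (continuous_const.mul (continuous_pow k)).intervalIntegrable _ _),
    Finset.mul_sum]
  refine Finset.sum_congr rfl fun k _ => ?_
  rw [integral_const_mul, integral_pow]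
  field_simp

lemma pointReconstruction_cubic (h L x : ℝ) (c : ℕ → ℝ) (hh : h ≠ 0) :
    pointReconstruction h (fun t => ∑ k ∈ Finset.range 4, c k * (t - L) ^ k) x =
      ∑ k ∈ Finset.range 4, c k * (x - L) ^ k := by
  simp only [pointReconstruction, cellAverage_cubic h L _ c hh]
  simp only [Finset.sum_range_succ, Finset.sum_range_zero]
  field_simp
  ring

lemma cellAverage_sub {u v : ℝ → ℝ} (hu : Continuous u) (hv : Continuous v) (h x : ℝ) :
    cellAverage h (fun t => u t - v t) x = cellAverage h u x - cellAverage h v x := by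
  rw [cellAverage, cellAverage, cellAverage, integral_sub (hu.intervalIntegrable _ _)
    (hv.intervalIntegrable _ _), mul_sub]

lemma cellAverage_const_mul (u : ℝ → ℝ) (c h x : ℝ) :
    cellAverage h (fun t => c * u t) x = c * cellAverage h u x := by
  rw [cellAverage, cellAverage, integral_const_mul, mul_left_comm]

lemma cellAverage_add {u v : ℝ → ℝ} (hu : Continuous u) (hv : Continuous v) (h x : ℝ) :
    cellAverage h (fun t => u t + v t) x = cellAverage h u x + cellAverage h v x := by
  rw [cellAverage, cellAverage, cellAverage, integral_add (hu.intervalIntegrable _ _)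
    (hv.intervalIntegrable _ _), mul_add]

lemma pointReconstruction_sub {u v : ℝ → ℝ} (hu : Continuous u) (hv : Continuous v) (h x : ℝ) :
    pointReconstruction h (fun t => u t - v t) x =
      pointReconstruction h u x - pointReconstruction h v x := by
  simp only [pointReconstruction, cellAverage_sub hu hv]
  ring

lemma abs_cellAverage_le {u : ℝ → ℝ} {h x B : ℝ} (hh : 0 < h)
    (hB : ∀ t ∈ Icc (x - h / 2) (x + h / 2), |u t| ≤ B) : |cellAverage h u x| ≤ B := by
  have hint : ‖∫ t in x - h / 2..x + h / 2, u t‖ ≤ B * |x + h / 2 - (x - h / 2)| :=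
    norm_integral_le_of_norm_le_const fun t ht =>
      hB t (Ioc_subset_Icc_self (by rwa [uIoc_of_le (by linarith)] at ht))
  rw [show x + h / 2 - (x - h / 2) = h by ring, abs_of_pos hh, Real.norm_eq_abs] at hint
  rw [cellAverage, abs_mul, abs_inv, abs_of_pos hh, inv_mul_le_iff₀ hh]
  linarith

lemma abs_pointReconstruction_le {u : ℝ → ℝ} {h x B : ℝ} (hh : 0 < h)
    (hB : ∀ t ∈ Icc (x - 3 * h / 2) (x + 3 * h / 2), |u t| ≤ B) :
    |pointReconstruction h u x| ≤ 7 / 6 * B := by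
  have hcell : ∀ y, |y - x| ≤ h → |cellAverage h u y| ≤ B := fun y hy =>
    abs_cellAverage_le hh fun t ht => hB t ⟨by linarith [ht.1, (abs_le.mp hy).1],
      by linarith [ht.2, (abs_le.mp hy).2]⟩
  have h0 := abs_le.mp (hcell x (by simp [hh.le]))
  have hm := abs_le.mp (hcell (x - h) (by simp [abs_of_pos hh]))
  have hp := abs_le.mp (hcell (x + h) (by simp [abs_of_pos hh]))
  rw [pointReconstruction, abs_le]
  constructor <;> linarith [h0.1, h0.2, hm.1, hm.2, hp.1, hp.2]

theorem abs_sub_pointReconstruction_le {g : ℝ → ℝ} {h x M : ℝ} (hg : ContDiff ℝ 4 g)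
    (hh : 0 < h)
    (hM : ∀ y ∈ Icc (x - 3 * h / 2) (x + 3 * h / 2), ‖iteratedDeriv 4 g y‖ ≤ M) :
    |g x - pointReconstruction h g x| ≤ 30 * M * h ^ 4 := by
  have hI : x - 3 * h / 2 < x + 3 * h / 2 := by linarith
  set P : ℝ → ℝ := fun t => ∑ k ∈ Finset.range 4, (k.factorial : ℝ)⁻¹ *
    iteratedDerivWithin k g (Icc (x - 3 * h / 2) (x + 3 * h / 2)) (x - 3 * h / 2) *
      (t - (x - 3 * h / 2)) ^ k
  have htaylor : ∀ t ∈ Icc (x - 3 * h / 2) (x + 3 * h / 2),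
      |g t - P t| ≤ 27 / 2 * M * h ^ 4 := by
    intro t ht
    have hb := taylor_mean_remainder_bound (n := 3) hI.le hg.contDiffOn ht fun y hy => by
      rw [iteratedDerivWithin_eq_iteratedDeriv (uniqueDiffOn_Icc hI) hg.contDiffAt hy]
      exact hM y hy
    have hP :
        taylorWithinEval g 3 (Icc (x - 3 * h / 2) (x + 3 * h / 2)) (x - 3 * h / 2) t = P t := by
      simp only [taylor_within_apply, P, smul_eq_mul]
      exact Finset.sum_congr rfl fun k _ => by ring
    rw [hP, Real.norm_eq_abs] at hb
    have hM0 : 0 ≤ M := (norm_nonneg _).trans (hM t ht)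
    have hdist : (t - (x - 3 * h / 2)) ^ 4 ≤ (3 * h) ^ 4 :=
      pow_le_pow_left₀ (by linarith [ht.1]) (by linarith [ht.2]) 4
    calc |g t - P t| ≤ M * (t - (x - 3 * h / 2)) ^ (3 + 1) / (Nat.factorial 3) := hb
      _ ≤ M * (3 * h) ^ 4 / 6 := by norm_num [Nat.factorial]; gcongr
      _ = 27 / 2 * M * h ^ 4 := by ring
  have hexact : pointReconstruction h P x = P x := pointReconstruction_cubic h _ x _ hh.ne'
  have hrest := abs_pointReconstruction_le hh htaylor
  rw [pointReconstruction_sub hg.continuous (by fun_prop), hexact, abs_sub_comm] at hrest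
  have hx := htaylor x ⟨by linarith, by linarith⟩
  calc |g x - pointReconstruction h g x|
      ≤ |g x - P x| + |P x - pointReconstruction h g x| := abs_sub_le _ _ _
    _ ≤ 30 * M * h ^ 4 := by linarith [abs_nonneg (g x - P x)]

lemma continuous_cellAverage_slice {g : ℝ × ℝ → ℝ} (hg : Continuous g) (h y : ℝ) :
    Continuous fun s => cellAverage h (fun t => g (s, t)) y :=
  continuous_const.mul (continuous_parametric_intervalIntegral_of_continuous' (by exact hg) _ _)

lemma continuous_pointReconstruction_slice {g : ℝ × ℝ → ℝ} (hg : Continuous g) (h y : ℝ) :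
    Continuous fun s => pointReconstruction h (fun t => g (s, t)) y := by
  have := continuous_cellAverage_slice hg h
  unfold pointReconstruction
  fun_prop

lemma cellAverage_sub_secondDiff {u v w : ℝ → ℝ} (hu : Continuous u) (hv : Continuous v)
    (hw : Continuous w) (c h x : ℝ) :
    cellAverage h (fun s => u s - c * (v s - 2 * u s + w s)) x =
      cellAverage h u x - c * (cellAverage h v x - 2 * cellAverage h u x + cellAverage h w x) := by
  rw [cellAverage_sub hu (by fun_prop), cellAverage_const_mul, cellAverage_add (by fun_prop) hw,
    cellAverage_sub hv (by fun_prop), cellAverage_const_mul]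

lemma cellAverage_pointReconstruction_slice {g : ℝ × ℝ → ℝ} (hg : Continuous g) (h x y : ℝ) :
    cellAverage h (fun s => pointReconstruction h (fun t => g (s, t)) y) x =
      cellAverage2 h g x y - 1 / 24 * (cellAverage2 h g x (y - h) - 2 * cellAverage2 h g x y
        + cellAverage2 h g x (y + h)) :=
  have hc := continuous_cellAverage_slice hg h
  cellAverage_sub_secondDiff (hc y) (hc _) (hc _) _ h x

lemma pointReconstruction_pointReconstruction {g : ℝ × ℝ → ℝ} (hg : Continuous g) (h a b : ℝ) :
    pointReconstruction h (fun s => pointReconstruction h (fun t => g (s, t)) b) a =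
      cellAverage2 h g a b
          - (1 / 24) * ((cellAverage2 h g (a - h) b - 2 * cellAverage2 h g a b
              + cellAverage2 h g (a + h) b)
            + (cellAverage2 h g a (b - h) - 2 * cellAverage2 h g a b + cellAverage2 h g a (b + h)))
          + (1 / 576) * ((cellAverage2 h g (a - h) (b - h) - 2 * cellAverage2 h g (a - h) b
                + cellAverage2 h g (a - h) (b + h))
              - 2 * (cellAverage2 h g a (b - h) - 2 * cellAverage2 h g a b
                + cellAverage2 h g a (b + h))
              + (cellAverage2 h g (a + h) (b - h) - 2 * cellAverage2 h g (a + h) b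
                + cellAverage2 h g (a + h) (b + h))) := by
  rw [pointReconstruction]
  simp only [cellAverage_pointReconstruction_slice hg]
  ring

lemma cellAverage2_eq_of_eqOn {f g : ℝ × ℝ → ℝ} {h x y : ℝ}
    (hfg : EqOn f g (Icc (x - h / 2) (x + h / 2) ×ˢ Icc (y - h / 2) (y + h / 2))) (hh : 0 ≤ h) :
    (1 / h ^ 2) * ∫ s in (x - h / 2)..(x + h / 2), ∫ t in (y - h / 2)..(y + h / 2), f (s, t) =
      cellAverage2 h g x y := by
  have hx : x - h / 2 ≤ x + h / 2 := by linarith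
  have hy : y - h / 2 ≤ y + h / 2 := by linarith
  rw [cellAverage2, cellAverage, one_div, pow_two, mul_inv, mul_assoc, ← integral_const_mul]
  congr 1
  refine integral_congr fun s hs => ?_
  rw [cellAverage]
  congr 1
  refine integral_congr fun t ht => hfg ⟨?_, ?_⟩
  · rwa [uIcc_of_le hx] at hs
  · rwa [uIcc_of_le hy] at ht

lemma norm_iteratedDeriv_comp_line_le {E F : Type*} [NormedAddCommGroup E] [NormedSpace ℝ E]
    [NormedAddCommGroup F] [NormedSpace ℝ F] {g : E → F} {n : WithTop ℕ∞} {k : ℕ}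
    (hg : ContDiff ℝ n g) (hk : k ≤ n) (p v : E) (t : ℝ) :
    ‖iteratedDeriv k (fun s : ℝ => g (p + s • v)) t‖ ≤
      ‖iteratedFDeriv ℝ k g (p + t • v)‖ * ‖v‖ ^ k := by
  have hcomp : (fun s : ℝ => g (p + s • v)) =
      (fun z => g (p + z)) ∘ (ContinuousLinearMap.smulRight (1 : ℝ →L[ℝ] ℝ) v) := by
    ext s; simp
  rw [iteratedDeriv_eq_iteratedFDeriv, hcomp,
    ContinuousLinearMap.iteratedFDeriv_comp_right (f := fun z => g (p + z)) _
      (hg.comp (contDiff_const.add contDiff_id)) _ hk,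
    iteratedFDeriv_comp_add_left]
  simpa using (iteratedFDeriv ℝ k g (p + t • v)).le_opNorm fun _ => v

lemma norm_iteratedDeriv_slice_fst_le {g : ℝ × ℝ → ℝ} {n : WithTop ℕ∞} {k : ℕ}
    (hg : ContDiff ℝ n g) (hk : k ≤ n) (s t : ℝ) :
    ‖iteratedDeriv k (fun s' => g (s', t)) s‖ ≤ ‖iteratedFDeriv ℝ k g (s, t)‖ := by
  simpa using norm_iteratedDeriv_comp_line_le hg hk (0, t) (1, 0) s

lemma norm_iteratedDeriv_slice_snd_le {g : ℝ × ℝ → ℝ} {n : WithTop ℕ∞} {k : ℕ}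
    (hg : ContDiff ℝ n g) (hk : k ≤ n) (s t : ℝ) :
    ‖iteratedDeriv k (fun t' => g (s, t')) t‖ ≤ ‖iteratedFDeriv ℝ k g (s, t)‖ := by
  simpa using norm_iteratedDeriv_comp_line_le hg hk (s, 0) (0, 1) t

lemma ContDiffOn.contDiff_smul_of_tsupport_subset {E F : Type*} [NormedAddCommGroup E]
    [NormedSpace ℝ E] [NormedAddCommGroup F] [NormedSpace ℝ F] {f : E → F} {χ : E → ℝ}
    {U : Set E} {n : WithTop ℕ∞} (hf : ContDiffOn ℝ n f U) (hU : IsOpen U) (hχ : ContDiff ℝ n χ)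
    (hsupp : tsupport χ ⊆ U) : ContDiff ℝ n fun x => χ x • f x := by
  refine contDiff_iff_contDiffAt.mpr fun x => ?_
  by_cases hx : x ∈ U
  · exact hχ.contDiffAt.smul (hf.contDiffAt (hU.mem_nhds hx))
  · have hzero : χ =ᶠ[𝓝 x] 0 := notMem_tsupport_iff_eventuallyEq.mp fun h => hx (hsupp h)
    exact (contDiffAt_const (c := (0 : F))).congr_of_eventuallyEq
      (hzero.mono fun y hy => by simp [hy])

lemma ContDiffOn.exists_contDiff_eqOn_closedBall {E F : Type*} [NormedAddCommGroup E]
    [NormedSpace ℝ E] [FiniteDimensional ℝ E] [NormedAddCommGroup F] [NormedSpace ℝ F]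
    {f : E → F} {U : Set E} {n : ℕ∞} (hf : ContDiffOn ℝ n f U) (hU : IsOpen U) {c : E} {r : ℝ}
    (hr : 0 < r) (hcU : closedBall c r ⊆ U) :
    ∃ g : E → F, ContDiff ℝ n g ∧ EqOn g f (closedBall c r) := by
  obtain ⟨ε, hε, hεU⟩ := (isCompact_closedBall c r).exists_cthickening_subset_open hU hcU
  rw [cthickening_closedBall hε.le hr.le] at hεU
  let χ : ContDiffBump c := ⟨r, ε + r, hr, by linarith⟩
  refine ⟨fun x => χ x • f x, hf.contDiff_smul_of_tsupport_subset hU χ.contDiff ?_, fun x hx => ?_⟩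
  · rwa [χ.tsupport_eq]
  · simp [χ.one_of_mem_closedBall hx]

theorem abs_sub_pointReconstruction_pointReconstruction_le {g : ℝ × ℝ → ℝ} {h a b M : ℝ}
    (hg : ContDiff ℝ 4 g) (hh : 0 < h)
    (hM : ∀ p ∈ Icc (a - 3 * h / 2) (a + 3 * h / 2) ×ˢ Icc (b - 3 * h / 2) (b + 3 * h / 2),
      ‖iteratedFDeriv ℝ 4 g p‖ ≤ M) :
    |g (a, b) - pointReconstruction h (fun s => pointReconstruction h (fun t => g (s, t)) b) a|
      ≤ 65 * M * h ^ 4 := by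
  have hrow : |g (a, b) - pointReconstruction h (fun s => g (s, b)) a| ≤ 30 * M * h ^ 4 :=
    abs_sub_pointReconstruction_le (g := fun s => g (s, b)) (hg.comp (by fun_prop)) hh
      fun s hs =>
      (norm_iteratedDeriv_slice_fst_le hg le_rfl s b).trans
        (hM _ ⟨hs, by constructor <;> linarith⟩)
  have hcols : ∀ s ∈ Icc (a - 3 * h / 2) (a + 3 * h / 2),
      |g (s, b) - pointReconstruction h (fun t => g (s, t)) b| ≤ 30 * M * h ^ 4 := fun s hs =>
    abs_sub_pointReconstruction_le (g := fun t => g (s, t)) (hg.comp (by fun_prop)) hh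
      fun t ht => (norm_iteratedDeriv_slice_snd_le hg le_rfl s t).trans (hM _ ⟨hs, ht⟩)
  have hcorr := abs_pointReconstruction_le hh hcols
  rw [pointReconstruction_sub (u := fun s => g (s, b)) (hg.continuous.comp (by fun_prop))
    (continuous_pointReconstruction_slice hg.continuous h b)] at hcorr
  calc _ ≤ |g (a, b) - pointReconstruction h (fun s => g (s, b)) a|
        + |pointReconstruction h (fun s => g (s, b)) a
          - pointReconstruction h (fun s => pointReconstruction h (fun t => g (s, t)) b) a| :=
        abs_sub_le _ _ _
    _ ≤ 65 * M * h ^ 4 := by linarith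

theorem stmt16 (f : ℝ × ℝ → ℝ) (a b H : ℝ) (hH : 0 < H)
    (U : Set (ℝ × ℝ)) (hU : IsOpen U)
    (hbox : Set.Icc (a - 3 * H / 2) (a + 3 * H / 2) ×ˢ
        Set.Icc (b - 3 * H / 2) (b + 3 * H / 2) ⊆ U)
    (hf : ContDiffOn ℝ 4 f U)
    (F : ℝ → ℝ → ℝ → ℝ)
    (hF : ∀ h x y, F h x y = (1 / h ^ 2) *
        ∫ s in (x - h / 2)..(x + h / 2), ∫ t in (y - h / 2)..(y + h / 2), f (s, t)) :
    ∃ C : ℝ, ∀ h : ℝ, 0 < h → h ≤ H →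
      |f (a, b) - (F h a b
          - (1 / 24) * ((F h (a - h) b - 2 * F h a b + F h (a + h) b)
              + (F h a (b - h) - 2 * F h a b + F h a (b + h)))
          + (1 / 576) * ((F h (a - h) (b - h) - 2 * F h (a - h) b + F h (a - h) (b + h))
              - 2 * (F h a (b - h) - 2 * F h a b + F h a (b + h))
              + (F h (a + h) (b - h) - 2 * F h (a + h) b + F h (a + h) (b + h))))|
        ≤ C * h ^ 4 := by
  have hball : closedBall (a, b) (3 * H / 2) =
      Icc (a - 3 * H / 2) (a + 3 * H / 2) ×ˢ Icc (b - 3 * H / 2) (b + 3 * H / 2) := by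
    rw [← closedBall_prod_same, Real.closedBall_eq_Icc, Real.closedBall_eq_Icc]
  obtain ⟨g, hg, hgf⟩ :=
    hf.exists_contDiff_eqOn_closedBall hU (by positivity) (hball ▸ hbox)
  obtain ⟨M, hM⟩ := (isCompact_closedBall (a, b) (3 * H / 2)).exists_bound_of_continuousOn
    (hg.continuous_iteratedFDeriv le_rfl).continuousOn
  rw [hball] at hgf hM
  refine ⟨65 * M, fun h hh hhH => ?_⟩
  have hFg : ∀ x y, a - h ≤ x → x ≤ a + h → b - h ≤ y → y ≤ b + h →
      F h x y = cellAverage2 h g x y := fun x y hx₁ hx₂ hy₁ hy₂ => by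
    rw [hF]
    refine cellAverage2_eq_of_eqOn (hgf.symm.mono (prod_mono ?_ ?_)) hh.le <;>
      exact Icc_subset_Icc (by linarith) (by linarith)
  rw [← hgf ⟨⟨by linarith, by linarith⟩, ⟨by linarith, by linarith⟩⟩,
    hFg a b, hFg (a - h) b, hFg (a + h) b, hFg a (b - h), hFg a (b + h), hFg (a - h) (b - h),
    hFg (a - h) (b + h), hFg (a + h) (b - h), hFg (a + h) (b + h),
    ← pointReconstruction_pointReconstruction hg.continuous]
  · exact abs_sub_pointReconstruction_pointReconstruction_le hg hh fun p hp =>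
      hM p (prod_mono (Icc_subset_Icc (by linarith) (by linarith))
        (Icc_subset_Icc (by linarith) (by linarith)) hp)
  all_goals linarith
end

section
/- Let P : ℝ² → ℝ be a polynomial of degree at most 2 in each variable, h > 0, (n₁, n₂) ∈ ℤ². Write P_{(i,j)} = P(ih, jh) and P̄_{(i,j)} for the 2D cell average over [ih-h/2, ih+h/2]×[jh-h/2, jh+h/2]. Then (16/9)·P̄_{(n₁,n₂)} - (2/9)·(P̄_{(n₁-1,n₂)} + P̄_{(n₁+1,n₂)} + P̄_{(n₁,n₂-1)} + P̄_{(n₁,n₂+1)}) + (1/36)·(P̄_{(n₁-1,n₂-1)} + P̄_{(n₁+1,n₂+1)} + P̄_{(n₁+1,n₂-1)} + P̄_{(n₁-1,n₂+1)}) = (25/16)·P_{(n₁,n₂)} - (5/32)·(P_{(n₁-1,n₂)} + P_{(n₁+1,n₂)} + P_{(n₁,n₂-1)} + P_{(n₁,n₂+1)}) + (1/64)·(P_{(n₁-1,n₂-1)} + P_{(n₁+1,n₂+1)} + P_{(n₁+1,n₂-1)} + P_{(n₁-1,n₂+1)}). -/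
/-!
Both stencils are tensor products of one-dimensional ones, with weights (4/3, -1/6) on cell
averages and (5/4, -1/8) on point values, so it suffices to compare them on monomials of degree
at most 2 in each variable. The cell average of a quadratic q at x is q(x) + q''h²/24, and both
one-dimensional stencils send q to q(x) - q''h²/8.
-/

open intervalIntegral

noncomputable def cellMean (h : ℝ) (f : ℝ → ℝ) (x : ℝ) : ℝ :=
  (1 / h) * ∫ s in x - h / 2..x + h / 2, f s

theorem integral_integral_sum_mul_pow {m n : ℕ} (c : Fin m → Fin n → ℝ) (a b a' b' : ℝ) :
    ∫ s in a..b, ∫ t in a'..b', ∑ i, ∑ j, c i j * s ^ (i : ℕ) * t ^ (j : ℕ)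
      = ∑ i, ∑ j, c i j * (∫ s in a..b, s ^ (i : ℕ)) * ∫ t in a'..b', t ^ (j : ℕ) := by
  have inner (s : ℝ) : ∫ t in a'..b', ∑ i, ∑ j, c i j * s ^ (i : ℕ) * t ^ (j : ℕ)
      = ∑ i, ∑ j, c i j * s ^ (i : ℕ) * ∫ t in a'..b', t ^ (j : ℕ) := by
    rw [integral_finsetSum fun i _ => (by fun_prop : Continuous _).intervalIntegrable _ _]
    refine Finset.sum_congr rfl fun i _ => ?_
    rw [integral_finsetSum fun j _ => (by fun_prop : Continuous _).intervalIntegrable _ _]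
    simp only [integral_const_mul]
  simp only [inner]
  rw [integral_finsetSum fun i _ => (by fun_prop : Continuous _).intervalIntegrable _ _]
  refine Finset.sum_congr rfl fun i _ => ?_
  rw [integral_finsetSum fun j _ => (by fun_prop : Continuous _).intervalIntegrable _ _]
  refine Finset.sum_congr rfl fun j _ => ?_
  simp only [mul_comm (c i j), mul_assoc, integral_mul_const]

theorem cellMean_stencil_pow {h : ℝ} (hh : h ≠ 0) (x : ℝ) (k : Fin 3) :
    4 / 3 * cellMean h (· ^ (k : ℕ)) (x * h)
        - 1 / 6 * (cellMean h (· ^ (k : ℕ)) ((x - 1) * h) + cellMean h (· ^ (k : ℕ)) ((x + 1) * h))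
      = 5 / 4 * (x * h) ^ (k : ℕ) - 1 / 8 * (((x - 1) * h) ^ (k : ℕ) + ((x + 1) * h) ^ (k : ℕ)) := by
  simp only [cellMean, integral_pow]
  fin_cases k <;> field_simp <;> ring

theorem stmt18 (c : Fin 3 → Fin 3 → ℝ) (P : ℝ → ℝ → ℝ)
    (hP : ∀ x y : ℝ, P x y = ∑ i : Fin 3, ∑ j : Fin 3, c i j * x ^ (i : ℕ) * y ^ (j : ℕ))
    (h : ℝ) (hh : 0 < h) (n₁ n₂ : ℤ) (Pb : ℤ → ℤ → ℝ)
    (hPb : ∀ i j : ℤ, Pb i j = (1 / h ^ 2) *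
        ∫ s in ((i : ℝ) * h - h / 2)..((i : ℝ) * h + h / 2),
          ∫ t in ((j : ℝ) * h - h / 2)..((j : ℝ) * h + h / 2), P s t) :
    (16 / 9) * Pb n₁ n₂
        - (2 / 9) * (Pb (n₁ - 1) n₂ + Pb (n₁ + 1) n₂ + Pb n₁ (n₂ - 1) + Pb n₁ (n₂ + 1))
        + (1 / 36) * (Pb (n₁ - 1) (n₂ - 1) + Pb (n₁ + 1) (n₂ + 1)
            + Pb (n₁ + 1) (n₂ - 1) + Pb (n₁ - 1) (n₂ + 1))
      = (25 / 16) * P ((n₁ : ℝ) * h) ((n₂ : ℝ) * h)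
        - (5 / 32) * (P (((n₁ - 1 : ℤ) : ℝ) * h) ((n₂ : ℝ) * h)
            + P (((n₁ + 1 : ℤ) : ℝ) * h) ((n₂ : ℝ) * h)
            + P ((n₁ : ℝ) * h) (((n₂ - 1 : ℤ) : ℝ) * h)
            + P ((n₁ : ℝ) * h) (((n₂ + 1 : ℤ) : ℝ) * h))
        + (1 / 64) * (P (((n₁ - 1 : ℤ) : ℝ) * h) (((n₂ - 1 : ℤ) : ℝ) * h)
            + P (((n₁ + 1 : ℤ) : ℝ) * h) (((n₂ + 1 : ℤ) : ℝ) * h)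
            + P (((n₁ + 1 : ℤ) : ℝ) * h) (((n₂ - 1 : ℤ) : ℝ) * h)
            + P (((n₁ - 1 : ℤ) : ℝ) * h) (((n₂ + 1 : ℤ) : ℝ) * h)) := by
  have hPb' (i j : ℤ) : Pb i j = ∑ k, ∑ l,
      c k l * cellMean h (· ^ (k : ℕ)) (i * h) * cellMean h (· ^ (l : ℕ)) (j * h) := by
    simp only [hPb, hP, integral_integral_sum_mul_pow, cellMean, Finset.mul_sum]
    exact Finset.sum_congr rfl fun k _ => Finset.sum_congr rfl fun l _ => by ring
  simp only [hPb', hP, Finset.mul_sum, ← Finset.sum_add_distrib, ← Finset.sum_sub_distrib]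
  refine Finset.sum_congr rfl fun k _ => Finset.sum_congr rfl fun l _ => ?_
  push_cast
  have hu := cellMean_stencil_pow hh.ne' n₁ k
  have hv := cellMean_stencil_pow hh.ne' n₂ l
  set u := cellMean h (· ^ (k : ℕ))
  set v := cellMean h (· ^ (l : ℕ))
  calc _ = c k l * ((4 / 3 * u (n₁ * h) - 1 / 6 * (u ((n₁ - 1) * h) + u ((n₁ + 1) * h)))
        * (4 / 3 * v (n₂ * h) - 1 / 6 * (v ((n₂ - 1) * h) + v ((n₂ + 1) * h)))) := by ring
    _ = _ := by rw [hu, hv]; ring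
end
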